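/- Fix reals α∈(0,1), c_TX>0, φ>0, set θ := φ/c_TX, fix λ>0 with √(λθ)<1 and an integer J≥1, and assume 1−α^{J−1}·(1−√(λθ)) < v_th∞(λ) < 1−α^{J}·(1−√(λθ)). Define the per-slot cost c_k := c_TX + φ·(1/√(λθ) − 1/V_k) if V_k > v_th∞(λ) and c_k := 0 otherwise, along the deterministic myopic recursion. Then lim_{T→∞} (1/(T+1))·Σ_{k=0}^{T} c_k = (1/J)·[ c_TX + (φ/√(λθ))·(1−α^{J})·(1−√(λθ)) / (1−α^{J}·(1−√(λθ))) ]. -/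

import Mathlib

/-- The `S_A = ∞` threshold `v_th∞(λ)`. -/
noncomputable def vthinf (th lam : ℝ) : ℝ :=
  Real.sqrt (lam * th) + lam / 2 +
    Real.sqrt lam * Real.sqrt (Real.sqrt (lam * th) + lam / 4)

/-!
Because `v_th∞` lies strictly between `1 − α^(J−1)(1 − √(λθ))` and `1 − α^J(1 − √(λθ))`,
after every transmission the state climbs through `1 − α^j(1 − √(λθ))` for `j = 1, …, J`
and crosses the threshold exactly when `j = J`. Hence from time `1` on the orbit is
`J`-periodic, the cost is a fixed amount `C` in every `J`-th slot and `0` otherwise,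
and the running average tends to `C / J`.
-/

open Filter Topology Finset

theorem mod_add_one_eq_iff_dvd {J k : ℕ} (hJ : 0 < J) : k % J + 1 = J ↔ J ∣ k + 1 := by
  rw [Nat.dvd_iff_mod_eq_zero, ← Nat.mod_add_mod]
  have hlt : k % J + 1 ≤ J := Nat.mod_lt k hJ
  rcases hlt.lt_or_eq with h | h
  · rw [Nat.mod_eq_of_lt h]
    omega
  · rw [h, Nat.mod_self]
    simp

theorem lt_one_sub_pow_mul_iff {α b v : ℝ} {J : ℕ} (hα0 : 0 < α) (hα1 : α < 1) (hb : 0 < b)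
    (hJ : 1 ≤ J) (hlow : 1 - α ^ (J - 1) * b < v) (hhigh : v < 1 - α ^ J * b) (j : ℕ) :
    v < 1 - α ^ j * b ↔ J ≤ j := by
  refine ⟨fun h => ?_, fun h => ?_⟩
  · by_contra! hj
    have : α ^ (J - 1) ≤ α ^ j := pow_le_pow_of_le_one hα0.le hα1.le (by omega)
    nlinarith
  · have : α ^ j ≤ α ^ J := pow_le_pow_of_le_one hα0.le hα1.le h
    nlinarith

theorem sum_range_succ_eq_add_mul_div {f : ℕ → ℝ} {a : ℝ} {J : ℕ}
    (hf : ∀ k, f (k + 1) = if J ∣ k + 1 then a else 0) (T : ℕ) :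
    ∑ k ∈ range (T + 1), f k = f 0 + a * (T / J : ℕ) := by
  induction T with
  | zero => simp
  | succ T ih =>
    rw [sum_range_succ, ih, hf, Nat.succ_div]
    split_ifs <;> push_cast <;> ring

theorem tendsto_natCast_div_div_add_one (J : ℕ) :
    Tendsto (fun T : ℕ => ((T / J : ℕ) : ℝ) / (T + 1)) atTop (𝓝 (1 / J)) := by
  have hfloor : Tendsto (fun T : ℕ => ((T / J : ℕ) : ℝ) / T) atTop (𝓝 (1 / J)) := by
    refine ((tendsto_nat_floor_mul_div_atTop (by positivity)).comp
      tendsto_natCast_atTop_atTop).congr fun T => ?_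
    simp [← Nat.floor_div_eq_div (K := ℝ), div_eq_inv_mul]
  have := hfloor.mul (tendsto_natCast_div_add_atTop (1 : ℝ))
  rw [mul_one] at this
  refine this.congr' ((eventually_ne_atTop 0).mono fun T hT => ?_)
  field_simp

theorem tendsto_mean_add_mul_div (a b : ℝ) (J : ℕ) :
    Tendsto (fun T : ℕ => 1 / ((T : ℝ) + 1) * (b + a * (T / J : ℕ))) atTop (𝓝 (a / J)) := by
  have := (tendsto_one_div_add_atTop_nhds_zero_nat.const_mul b).add
    ((tendsto_natCast_div_div_add_one J).const_mul a)
  convert this using 2 <;> ring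

section MyopicOrbit

variable {α s v : ℝ} {J : ℕ} {V : ℕ → ℝ}

theorem myopic_orbit_succ (hthr : ∀ j, v < 1 - α ^ j * (1 - s) ↔ J ≤ j) (hJ : 0 < J)
    (hV0 : v < V 0) (hrec : ∀ k, V (k + 1) = 1 - α * (1 - if v < V k then s else V k))
    (k : ℕ) : V (k + 1) = 1 - α ^ (k % J + 1) * (1 - s) := by
  induction k with
  | zero => simp [hrec, hV0]
  | succ n ih =>
    rw [hrec, ih, ← Nat.mod_add_mod]
    have hlt : n % J + 1 ≤ J := Nat.mod_lt n hJ
    rcases hlt.lt_or_eq with h | h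
    · rw [if_neg (by rw [hthr]; omega), Nat.mod_eq_of_lt h]
      ring
    · rw [if_pos ((hthr _).mpr h.ge), h, Nat.mod_self]
      ring

theorem lt_myopic_orbit_succ_iff (hthr : ∀ j, v < 1 - α ^ j * (1 - s) ↔ J ≤ j) (hJ : 0 < J)
    (hV0 : v < V 0) (hrec : ∀ k, V (k + 1) = 1 - α * (1 - if v < V k then s else V k))
    (k : ℕ) : v < V (k + 1) ↔ J ∣ k + 1 := by
  rw [myopic_orbit_succ hthr hJ hV0 hrec, hthr, ← mod_add_one_eq_iff_dvd hJ]
  have := Nat.mod_lt k hJ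
  omega

theorem myopic_orbit_succ_of_dvd (hthr : ∀ j, v < 1 - α ^ j * (1 - s) ↔ J ≤ j) (hJ : 0 < J)
    (hV0 : v < V 0) (hrec : ∀ k, V (k + 1) = 1 - α * (1 - if v < V k then s else V k))
    {k : ℕ} (hk : J ∣ k + 1) : V (k + 1) = 1 - α ^ J * (1 - s) := by
  rw [myopic_orbit_succ hthr hJ hV0 hrec, (mod_add_one_eq_iff_dvd hJ).mpr hk]

end MyopicOrbit

/-- under the stated threshold condition, the time-averaged
sensing-transmission cost along the deterministic myopic recursion converges to
`(1/J)·[c_TX + (φ/√(λθ))·(1−α^J)·(1−√(λθ))/(1−α^J·(1−√(λθ)))]`. -/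
theorem stmt_8 (alpha cTX phi th lam : ℝ) (halpha : alpha ∈ Set.Ioo (0 : ℝ) 1)
    (hcTX : 0 < cTX) (hphi : 0 < phi) (hthdef : th = phi / cTX)
    (hlam : 0 < lam) (hsq : Real.sqrt (lam * th) < 1)
    (J : ℕ) (hJ : 1 ≤ J)
    (hlow : 1 - alpha ^ (J - 1) * (1 - Real.sqrt (lam * th)) < vthinf th lam)
    (hhigh : vthinf th lam < 1 - alpha ^ J * (1 - Real.sqrt (lam * th)))
    (V c : ℕ → ℝ) (hV0 : V 0 = 1)
    (hrec : ∀ k : ℕ, V (k + 1) =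
      1 - alpha * (1 - (if vthinf th lam < V k then Real.sqrt (lam * th) else V k)))
    (hc : ∀ k : ℕ, c k =
      if vthinf th lam < V k then cTX + phi * (1 / Real.sqrt (lam * th) - 1 / V k)
      else 0) :
    Filter.Tendsto
      (fun T : ℕ => (1 / ((T : ℝ) + 1)) * ∑ k ∈ Finset.range (T + 1), c k)
      Filter.atTop
      (nhds ((1 / (J : ℝ)) *
        (cTX + (phi / Real.sqrt (lam * th)) *
          ((1 - alpha ^ J) * (1 - Real.sqrt (lam * th)) /
            (1 - alpha ^ J * (1 - Real.sqrt (lam * th))))))) := by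
  obtain ⟨hα0, hα1⟩ := halpha
  set s := Real.sqrt (lam * th)
  set v := vthinf th lam with hv
  have hs : 0 < s := Real.sqrt_pos.mpr (by rw [hthdef]; positivity)
  have hv0 : 0 < v := by rw [hv, vthinf]; positivity
  have hcycle : 0 < alpha ^ J * (1 - s) := mul_pos (pow_pos hα0 J) (sub_pos.mpr hsq)
  have hthr := lt_one_sub_pow_mul_iff hα0 hα1 (sub_pos.mpr hsq) hJ hlow hhigh
  have hVv : v < V 0 := by linarith
  have hcost : ∀ k, c (k + 1) =
      if J ∣ k + 1 then cTX + phi * (1 / s - 1 / (1 - alpha ^ J * (1 - s))) else 0 := by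
    intro k
    simp only [hc, lt_myopic_orbit_succ_iff hthr hJ hVv hrec]
    split_ifs with hk
    · rw [myopic_orbit_succ_of_dvd hthr hJ hVv hrec hk]
    · rfl
  have hlim : (cTX + phi * (1 / s - 1 / (1 - alpha ^ J * (1 - s)))) / J =
      1 / J * (cTX + phi / s * ((1 - alpha ^ J) * (1 - s) / (1 - alpha ^ J * (1 - s)))) := by
    have : 1 - alpha ^ J * (1 - s) ≠ 0 := by linarith
    field_simp
    ring
  rw [← hlim]
  simpa only [sum_range_succ_eq_add_mul_div hcost] using tendsto_mean_add_mul_div _ (c 0) J
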